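/- arXiv:1910.09373 — 4 statements merged into one kernel-verified Lean document; each statement's English description precedes it below -/
import Mathlib

section
/- Let f : ℝⁿ → ℝ be continuously differentiable with L_f-Lipschitz gradient and φ proper convex lsc. Fix x ∈ dom φ, d, v, v₊ ∈ ℝⁿ, scalars α, β, ρ > 0, and step sizes λ, λ₊ > 0. Set F^λ_v(x) := x − prox_{λφ}(x − λv), p^λ_v(x) := prox_{λφ}(x − λv), p^λ(x) := prox_{λφ}(x − λ∇f(x)), F^λ(x) := x − p^λ(x), and p₊ := prox_{λ₊φ}(x + αd − λ₊v₊). Then with ψ = f + φ and ℓ(λ₊,α,β) := λ₊(α/λ₊ + L_f β)², 2[ψ(p₊) − ψ(x)] ≤ (1/ρ)‖∇f(x) − v‖² + λ₊‖∇f(x+βd) − v₊‖² + (1/λ₊ − 1/λ)‖F^λ_v(x)‖² + (L_f − 1/λ₊)‖p₊ − x‖² + (ρ − 1/λ)‖p^λ_v(x) − p^λ(x)‖² + ℓ(λ₊,α,β)‖d‖² − (1/λ)‖F^λ(x)‖² + 2⟨∇f(x+βd) − v₊, λ₊(∇f(x) − ∇f(x+βd)) + αd⟩. -/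
/-!
Sum the prox three-point inequalities at `p₊` (tested at `p^λ_v(x)`), at `p^λ_v(x)` (tested at
`p^λ(x)`) and at `p^λ(x)` (tested at `x`) with the descent lemma for `f` between `x` and `p₊`.
All gradient terms collapse into `⟪q, p₊ - p^λ_v(x)⟫ + ⟪p^λ_v(x) - p^λ(x), ∇f(x) - v⟫`, where
`q = (∇f(x + βd) - v₊) + r` and `r = ∇f(x) - ∇f(x + βd) + (α/λ₊) d`. Both are bounded by Young's
inequality; expanding `λ₊‖q‖²` produces the final inner product term, and `‖r‖ ≤ (α/λ₊ + L_f β)‖d‖`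
by the Lipschitz continuity of `∇f`.
-/

open scoped RealInnerProductSpace

/-- `p` is the proximal point `prox_{λφ}(x)`. -/
def IsProx {n : ℕ} (φ : EuclideanSpace ℝ (Fin n) → ℝ) (lam : ℝ)
    (x p : EuclideanSpace ℝ (Fin n)) : Prop :=
  ∀ y, φ p + (1 / (2 * lam)) * ‖x - p‖ ^ 2 ≤ φ y + (1 / (2 * lam)) * ‖x - y‖ ^ 2

open Set Filter Topology

theorem le_of_forall_le_add_mul {a b C : ℝ} (h : ∀ t ∈ Ioc (0 : ℝ) 1, a ≤ b + t * C) : a ≤ b := by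
  have hlim : Tendsto (fun t : ℝ => b + t * C) (𝓝[>] 0) (𝓝 b) := by
    have : Continuous fun t : ℝ => b + t * C := by fun_prop
    simpa using (this.tendsto 0).mono_left nhdsWithin_le_nhds
  exact ge_of_tendsto hlim (mem_of_superset (Ioc_mem_nhdsGT one_pos) h)

section InnerProductSpace

variable {F : Type*} [NormedAddCommGroup F] [InnerProductSpace ℝ F]

theorem two_mul_real_inner_le_add_mul_sq {ε : ℝ} (hε : 0 < ε) (a b : F) :
    2 * ⟪a, b⟫ ≤ ε * ‖a‖ ^ 2 + ε⁻¹ * ‖b‖ ^ 2 :=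
  calc 2 * ⟪a, b⟫ ≤ 2 * ‖a‖ * ‖b‖ := by linarith [real_inner_le_norm a b]
    _ ≤ ε * ‖a‖ ^ 2 + ε⁻¹ * ‖b‖ ^ 2 := two_mul_le_add_mul_sq hε

theorem two_mul_real_inner_add_le {ε K : ℝ} (hε : 0 < ε) (a b : F) {r : F} (hr : ‖r‖ ≤ K) :
    2 * ⟪a + r, b⟫ ≤ ε * ‖a‖ ^ 2 + 2 * ⟪a, ε • r⟫ + ε * K ^ 2 + ε⁻¹ * ‖b‖ ^ 2 := by
  have hr2 : ‖r‖ ^ 2 ≤ K ^ 2 := pow_le_pow_left₀ (norm_nonneg r) hr 2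
  have := two_mul_real_inner_le_add_mul_sq hε (a + r) b
  rw [norm_add_sq_real] at this
  rw [real_inner_smul_right]
  linarith [mul_le_mul_of_nonneg_left hr2 hε.le]

theorem image_le_add_inner_add_sq_of_lipschitz_gradient [CompleteSpace F] {f : F → ℝ}
    {f' : F → F} {L : ℝ} (hf : ∀ x, HasGradientAt f (f' x) x)
    (hL : ∀ x y, ‖f' x - f' y‖ ≤ L * ‖x - y‖) (x y : F) :
    f y ≤ f x + ⟪f' x, y - x⟫ + L / 2 * ‖y - x‖ ^ 2 := by
  set u := y - x
  let g : ℝ → ℝ := fun t => f (x + t • u) - t * ⟪f' x, u⟫ - L / 2 * t ^ 2 * ‖u‖ ^ 2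
  have hg : ∀ t, HasDerivAt g (⟪f' (x + t • u), u⟫ - ⟪f' x, u⟫ - L * t * ‖u‖ ^ 2) t := by
    intro t
    have hline : HasDerivAt (fun s : ℝ => x + s • u) u t := by
      simpa using ((hasDerivAt_id t).smul_const u).const_add x
    refine ((((hf _).hasFDerivAt.comp_hasDerivAt t hline).sub
      ((hasDerivAt_id t).mul_const ⟪f' x, u⟫)).sub
      (((hasDerivAt_pow 2 t).const_mul (L / 2)).mul_const (‖u‖ ^ 2))).congr_deriv ?_
    rw [InnerProductSpace.toDual_apply_apply]
    ring
  have hanti : AntitoneOn g (Icc 0 1) := by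
    refine antitoneOn_of_hasDerivWithinAt_nonpos (convex_Icc 0 1)
      (fun t _ => (hg t).continuousAt.continuousWithinAt) (fun t _ => (hg t).hasDerivWithinAt) ?_
    rw [interior_Icc]
    rintro t ⟨ht, -⟩
    have hLt : ‖f' (x + t • u) - f' x‖ ≤ L * t * ‖u‖ := by
      simpa [norm_smul, abs_of_pos ht, mul_assoc] using hL (x + t • u) x
    calc ⟪f' (x + t • u), u⟫ - ⟪f' x, u⟫ - L * t * ‖u‖ ^ 2
        = ⟪f' (x + t • u) - f' x, u⟫ - L * t * ‖u‖ * ‖u‖ := by rw [inner_sub_left]; ring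
      _ ≤ 0 := by nlinarith [real_inner_le_norm (f' (x + t • u) - f' x) u, norm_nonneg u]
  have h01 := hanti (left_mem_Icc.2 zero_le_one) (right_mem_Icc.2 zero_le_one) zero_le_one
  simp only [g, u, one_smul, zero_smul, add_zero, add_sub_cancel] at h01
  linarith

end InnerProductSpace

namespace IsProx

variable {n : ℕ} {φ : EuclideanSpace ℝ (Fin n) → ℝ} {lam : ℝ}

theorem inner_le (hφ : ConvexOn ℝ univ φ) {u p : EuclideanSpace ℝ (Fin n)}
    (hp : IsProx φ lam u p) (y : EuclideanSpace ℝ (Fin n)) :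
    φ p + lam⁻¹ * ⟪u - p, y - p⟫ ≤ φ y := by
  refine le_of_forall_le_add_mul (C := 1 / (2 * lam) * ‖y - p‖ ^ 2) fun t ⟨ht0, ht1⟩ => ?_
  have hseg : φ (p + t • (y - p)) ≤ φ p + t * (φ y - φ p) := by
    have := hφ.2 (mem_univ p) (mem_univ y) (sub_nonneg.2 ht1) ht0.le (sub_add_cancel 1 t)
    rw [show (1 - t) • p + t • y = p + t • (y - p) by module, smul_eq_mul, smul_eq_mul] at this
    linarith
  have hsq : ‖u - (p + t • (y - p))‖ ^ 2
      = ‖u - p‖ ^ 2 - 2 * t * ⟪u - p, y - p⟫ + t ^ 2 * ‖y - p‖ ^ 2 := by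
    rw [show u - (p + t • (y - p)) = (u - p) - t • (y - p) by abel, norm_sub_sq_real,
      real_inner_smul_right, norm_smul, Real.norm_eq_abs, mul_pow, sq_abs]
    ring
  have hmin := hp (p + t • (y - p))
  rw [hsq] at hmin
  rw [show lam⁻¹ = 2 * (1 / (2 * lam)) by ring]
  refine le_of_mul_le_mul_left ?_ ht0
  linarith

theorem three_point (hφ : ConvexOn ℝ univ φ) (hlam : lam ≠ 0) {x g p : EuclideanSpace ℝ (Fin n)}
    (hp : IsProx φ lam (x - lam • g) p) (y : EuclideanSpace ℝ (Fin n)) :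
    2 * φ p + 2 * ⟪g, p - y⟫ + lam⁻¹ * (‖x - p‖ ^ 2 + ‖p - y‖ ^ 2 - ‖x - y‖ ^ 2) ≤ 2 * φ y := by
  have h := hp.inner_le hφ y
  have hpol : ‖x - p‖ ^ 2 + ‖p - y‖ ^ 2 - ‖x - y‖ ^ 2 = 2 * ⟪x - p, y - p⟫ := by
    rw [norm_sub_rev p y, ← sub_sub_sub_cancel_right x y p, norm_sub_sq_real (x - p) (y - p)]
    ring
  rw [sub_right_comm, inner_sub_left, real_inner_smul_left, mul_sub,
    inv_mul_cancel_left₀ hlam] at h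
  rw [hpol, ← neg_sub y p, inner_neg_right]
  linarith

end IsProx

/-- `pv`, `pf`, `pp` stand for `p^λ_v(x)`, `p^λ(x)`, `p₊`, so `F^λ_v(x) = x − pv` and
`F^λ(x) = x − pf`. -/
theorem extra_step_descent_general {n : ℕ}
    (f : EuclideanSpace ℝ (Fin n) → ℝ)
    (f' : EuclideanSpace ℝ (Fin n) → EuclideanSpace ℝ (Fin n))
    (φ : EuclideanSpace ℝ (Fin n) → ℝ) (Lf : ℝ)
    (hf : ∀ x, HasGradientAt f (f' x) x)
    (hLip : ∀ x y, ‖f' x - f' y‖ ≤ Lf * ‖x - y‖)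
    (hconv : ConvexOn ℝ Set.univ φ)
    (x d v vp : EuclideanSpace ℝ (Fin n))
    (α β ρ lam lamp : ℝ)
    (hα : 0 < α) (hβ : 0 < β) (hρ : 0 < ρ) (hlam : 0 < lam) (hlamp : 0 < lamp)
    (pv pf pp : EuclideanSpace ℝ (Fin n))
    (hpv : IsProx φ lam (x - lam • v) pv)
    (hpf : IsProx φ lam (x - lam • f' x) pf)
    (hpp : IsProx φ lamp (x + α • d - lamp • vp) pp) :
    2 * ((f pp + φ pp) - (f x + φ x)) ≤
      (1 / ρ) * ‖f' x - v‖ ^ 2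
      + lamp * ‖f' (x + β • d) - vp‖ ^ 2
      + (1 / lamp - 1 / lam) * ‖x - pv‖ ^ 2
      + (Lf - 1 / lamp) * ‖pp - x‖ ^ 2
      + (ρ - 1 / lam) * ‖pv - pf‖ ^ 2
      + (lamp * (α / lamp + Lf * β) ^ 2) * ‖d‖ ^ 2
      - (1 / lam) * ‖x - pf‖ ^ 2
      + 2 * ⟪f' (x + β • d) - vp, lamp • (f' x - f' (x + β • d)) + α • d⟫ := by
  have hD := image_le_add_inner_add_sq_of_lipschitz_gradient hf hLip x pp
  set g := f' x
  set w := f' (x + β • d)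
  set r := g - w + (α / lamp) • d
  have hpp' : IsProx φ lamp (x - lamp • (vp - (α / lamp) • d)) pp := by
    rwa [smul_sub, smul_smul, mul_div_cancel₀ _ hlamp.ne', sub_sub_eq_add_sub]
  have hA := hpp'.three_point hconv hlamp.ne' pv
  have hB := hpv.three_point hconv hlam.ne' pf
  have hC := hpf.three_point hconv hlam.ne' x
  rw [norm_sub_rev x pp] at hA
  rw [norm_sub_rev pf x, sub_self, norm_zero] at hC
  have hcross : ⟪g, pp - x⟫ - ⟪vp - (α / lamp) • d, pp - pv⟫ - ⟪v, pv - pf⟫ - ⟪g, pf - x⟫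
      = ⟪w - vp + r, pp - pv⟫ + ⟪pv - pf, g - v⟫ := by
    simp only [r, inner_add_left, inner_sub_left, inner_sub_right, real_inner_comm]
    ring
  have hY₁ := two_mul_real_inner_le_add_mul_sq hρ (pv - pf) (g - v)
  have hr : ‖r‖ ≤ (α / lamp + Lf * β) * ‖d‖ := by
    have hgw : ‖g - w‖ ≤ Lf * β * ‖d‖ := by
      simpa [norm_smul, abs_of_pos hβ, mul_assoc] using hLip x (x + β • d)
    calc ‖r‖ ≤ ‖g - w‖ + ‖(α / lamp) • d‖ := norm_add_le _ _
      _ ≤ Lf * β * ‖d‖ + α / lamp * ‖d‖ := by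
        rw [norm_smul, Real.norm_of_nonneg (by positivity)]; linarith
      _ = (α / lamp + Lf * β) * ‖d‖ := by ring
  have hY₂ := two_mul_real_inner_add_le hlamp (w - vp) (pp - pv) hr
  have hs : lamp • r = lamp • (g - w) + α • d := by
    rw [smul_add, smul_smul, mul_div_cancel₀ _ hlamp.ne']
  rw [hs] at hY₂
  simp only [one_div]
  linarith

/-- Key deterministic descent estimate (Lemma 2.1). Here
`pv = prox_{λφ}(x − λv)` so `F^λ_v(x) = x − pv`, `pf = prox_{λφ}(x − λ∇f(x))`
so `F^λ(x) = x − pf`, and `p₊ = prox_{λ₊φ}(x + αd − λ₊v₊)`, with `ψ = f + φ`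
and `ℓ(λ₊,α,β) = λ₊(α/λ₊ + L_fβ)²`. -/
theorem extra_step_descent {n : ℕ}
    (f : EuclideanSpace ℝ (Fin n) → ℝ)
    (f' : EuclideanSpace ℝ (Fin n) → EuclideanSpace ℝ (Fin n))
    (φ : EuclideanSpace ℝ (Fin n) → ℝ) (Lf : ℝ)
    (hf : ∀ x, HasGradientAt f (f' x) x)
    (hLip : ∀ x y, ‖f' x - f' y‖ ≤ Lf * ‖x - y‖)
    (hconv : ConvexOn ℝ Set.univ φ) (hlsc : LowerSemicontinuous φ)
    (x d v vp : EuclideanSpace ℝ (Fin n))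
    (α β ρ lam lamp : ℝ)
    (hα : 0 < α) (hβ : 0 < β) (hρ : 0 < ρ) (hlam : 0 < lam) (hlamp : 0 < lamp)
    (pv pf pp : EuclideanSpace ℝ (Fin n))
    (hpv : IsProx φ lam (x - lam • v) pv)
    (hpf : IsProx φ lam (x - lam • f' x) pf)
    (hpp : IsProx φ lamp (x + α • d - lamp • vp) pp) :
    2 * ((f pp + φ pp) - (f x + φ x)) ≤
      (1 / ρ) * ‖f' x - v‖ ^ 2
      + lamp * ‖f' (x + β • d) - vp‖ ^ 2
      + (1 / lamp - 1 / lam) * ‖x - pv‖ ^ 2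
      + (Lf - 1 / lamp) * ‖pp - x‖ ^ 2
      + (ρ - 1 / lam) * ‖pv - pf‖ ^ 2
      + (lamp * (α / lamp + Lf * β) ^ 2) * ‖d‖ ^ 2
      - (1 / lam) * ‖x - pf‖ ^ 2
      + 2 * ⟪f' (x + β • d) - vp, lamp • (f' x - f' (x + β • d)) + α • d⟫ :=
  extra_step_descent_general f f' φ Lf hf hLip hconv x d v vp α β ρ lam lamp hα hβ hρ hlam hlamp pv
    pf pp hpv hpf hpp
end

section
/- Let (x_k) be a sequence in ℝⁿ, (λ_k), (λ_{k,+}) positive sequences with ρ̲ λ_{k,+} ≤ λ_k for all k and some ρ̲ ∈ (0,1). Let G : ℝⁿ → ℝⁿ be Lipschitz continuous with constant L_G. Assume Σ_k λ_{k,+}^{-1} ‖x_{k+1} − x_k‖² < ∞ and Σ_k λ_k ‖G(x_k)‖² < ∞ and Σ_k λ_k = ∞. Then ‖G(x_k)‖ → 0 as k → ∞. -/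
open Filter

private lemma interval_sum_small {f : ℕ → ℝ} (hf0 : ∀ k, 0 ≤ f k) (hf : Summable f)
    {δ : ℝ} (hδ : 0 < δ) : ∃ N, ∀ t ℓ, N ≤ t → ∑ k ∈ Finset.Ico t ℓ, f k < δ := by
  have hcs : CauchySeq (fun n => ∑ i ∈ Finset.range n, f i) :=
    hf.hasSum.tendsto_sum_nat.cauchySeq
  obtain ⟨N, hN⟩ := Metric.cauchySeq_iff'.mp hcs δ hδ
  refine ⟨N, fun t ℓ ht => ?_⟩
  rcases le_or_gt ℓ t with h | h
  · rw [Finset.Ico_eq_empty (by omega : ¬ t < ℓ)]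
    simpa using hδ
  · have hNl : N ≤ ℓ := le_trans ht h.le
    have h2 := hN ℓ hNl
    rw [Real.dist_eq, abs_sub_lt_iff] at h2
    have hmono : ∑ i ∈ Finset.range N, f i ≤ ∑ i ∈ Finset.range t, f i :=
      Finset.sum_le_sum_of_subset_of_nonneg (Finset.range_subset_range.mpr ht)
        (fun i _ _ => hf0 i)
    have h1 : ∑ k ∈ Finset.Ico t ℓ, f k
        = ∑ i ∈ Finset.range ℓ, f i - ∑ i ∈ Finset.range t, f i :=
      Finset.sum_Ico_eq_sub f h.le
    linarith [h2.1]

/-- Deterministic core of Theorem 3.3: if `ρ λ_{k,+} ≤ λ_k` with `ρ ∈ (0,1)`,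
`G` is `L_G`-Lipschitz, `Σ λ_{k,+}⁻¹‖x_{k+1} − x_k‖² < ∞`,
`Σ λ_k‖G(x_k)‖² < ∞`, and `Σ λ_k = ∞`, then `‖G(x_k)‖ → 0`. -/
theorem residual_tendsto_zero {n : ℕ}
    (x : ℕ → EuclideanSpace ℝ (Fin n))
    (lam lamp : ℕ → ℝ) (ρ LG : ℝ) (hρ0 : 0 < ρ) (hρ1 : ρ < 1)
    (hlam : ∀ k, 0 < lam k) (hlamp : ∀ k, 0 < lamp k)
    (hcomp : ∀ k, ρ * lamp k ≤ lam k)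
    (G : EuclideanSpace ℝ (Fin n) → EuclideanSpace ℝ (Fin n))
    (hG : ∀ a b, ‖G a - G b‖ ≤ LG * ‖a - b‖)
    (hdisp : Summable (fun k => (lamp k)⁻¹ * ‖x (k + 1) - x k‖ ^ 2))
    (hres : Summable (fun k => lam k * ‖G (x k)‖ ^ 2))
    (hdiv : ¬ Summable lam) :
    Tendsto (fun k => ‖G (x k)‖) atTop (nhds 0) := by
  classical
  set a : ℕ → ℝ := fun k => ‖G (x k)‖ with ha
  set d : ℕ → ℝ := fun k => ‖x (k + 1) - x k‖ with hd
  have ha0 : ∀ k, 0 ≤ a k := fun k => norm_nonneg _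
  have hd0 : ∀ k, 0 ≤ d k := fun k => norm_nonneg _
  set L : ℝ := max LG 0 + 1 with hLdef
  have hL1 : (1 : ℝ) ≤ L := le_add_of_nonneg_left (le_max_right _ _)
  have hL0 : (0 : ℝ) < L := lt_of_lt_of_le one_pos hL1
  have hstep : ∀ k, |a (k + 1) - a k| ≤ L * d k := by
    intro k
    calc |a (k + 1) - a k| ≤ ‖G (x (k + 1)) - G (x k)‖ := abs_norm_sub_norm_le _ _
      _ ≤ LG * d k := hG _ _
      _ ≤ L * d k := by
          apply mul_le_mul_of_nonneg_right _ (hd0 k)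
          calc LG ≤ max LG 0 := le_max_left _ _
            _ ≤ L := by rw [hLdef]; linarith
  -- Summability of `λ_k⁻¹ d_k²`
  have hsum1 : Summable (fun k => (lam k)⁻¹ * d k ^ 2) := by
    apply Summable.of_nonneg_of_le
      (fun k => mul_nonneg (inv_nonneg.mpr (hlam k).le) (sq_nonneg _)) (fun k => ?_)
      (hdisp.mul_left ρ⁻¹)
    have h1 : (lam k)⁻¹ ≤ (ρ * lamp k)⁻¹ :=
      inv_anti₀ (mul_pos hρ0 (hlamp k)) (hcomp k)
    calc (lam k)⁻¹ * d k ^ 2 ≤ (ρ * lamp k)⁻¹ * d k ^ 2 := by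
          apply mul_le_mul_of_nonneg_right h1 (by positivity)
      _ = ρ⁻¹ * ((lamp k)⁻¹ * d k ^ 2) := by rw [mul_inv]; ring
  -- `a k` is frequently small
  have hlow : ∀ ε : ℝ, 0 < ε → ∀ N, ∃ k, N ≤ k ∧ a k < ε := by
    intro ε hε N
    by_contra hc
    push_neg at hc
    apply hdiv
    rw [← summable_nat_add_iff N]
    apply Summable.of_nonneg_of_le (fun k => (hlam _).le) (fun k => ?_)
      (((summable_nat_add_iff N).mpr hres).mul_left (ε ^ 2)⁻¹)
    have h1 : ε ≤ a (k + N) := hc (k + N) (by omega)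
    have h2 : ε ^ 2 ≤ a (k + N) ^ 2 := by nlinarith
    rw [le_inv_mul_iff₀ (by positivity : (0:ℝ) < ε ^ 2)]
    nlinarith [(hlam (k + N)).le]
  -- main contradiction argument
  by_contra hT
  rw [Metric.tendsto_atTop] at hT
  push_neg at hT
  obtain ⟨ε, hε, hfreq⟩ := hT
  have hfreq' : ∀ N, ∃ k, N ≤ k ∧ ε ≤ a k := by
    intro N
    obtain ⟨k, hk1, hk2⟩ := hfreq N
    refine ⟨k, hk1, ?_⟩
    rwa [Real.dist_eq, sub_zero, abs_of_nonneg (ha0 k)] at hk2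
  set δ : ℝ := ε / (2 * L) with hδdef
  have hδ : 0 < δ := by positivity
  obtain ⟨N1, hN1⟩ := interval_sum_small (f := fun k => (lam k)⁻¹ * d k ^ 2)
    (fun k => mul_nonneg (inv_nonneg.mpr (hlam k).le) (sq_nonneg _)) hsum1 hδ
  obtain ⟨N2, hN2⟩ := interval_sum_small (f := fun k => lam k * a k ^ 2)
    (fun k => mul_nonneg (hlam k).le (sq_nonneg _)) hres (by positivity : (0:ℝ) < δ * (ε / 2) ^ 2)
  obtain ⟨t, ht, hta⟩ := hfreq' (max N1 N2)
  obtain ⟨k0, hk01, hk02⟩ := hlow (ε / 2) (by positivity) (t + 1)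
  have hex : ∃ k, t < k ∧ a k < ε / 2 := ⟨k0, by omega, hk02⟩
  set ℓ := Nat.find hex with hℓ
  have hspec : t < ℓ ∧ a ℓ < ε / 2 := Nat.find_spec hex
  have hmin : ∀ k, t ≤ k → k < ℓ → ε / 2 ≤ a k := by
    intro k hk1 hk2
    rcases eq_or_lt_of_le hk1 with rfl | h
    · linarith
    · by_contra hcc
      push_neg at hcc
      exact Nat.find_min hex hk2 ⟨h, hcc⟩
  have hB1 : ∑ k ∈ Finset.Ico t ℓ, (lam k)⁻¹ * d k ^ 2 < δ :=
    hN1 t ℓ (le_trans (le_max_left _ _) ht)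
  have hB2 : ∑ k ∈ Finset.Ico t ℓ, lam k * a k ^ 2 < δ * (ε / 2) ^ 2 :=
    hN2 t ℓ (le_trans (le_max_right _ _) ht)
  have hB3 : ∑ k ∈ Finset.Ico t ℓ, lam k < δ := by
    have hle : (ε / 2) ^ 2 * ∑ k ∈ Finset.Ico t ℓ, lam k
        ≤ ∑ k ∈ Finset.Ico t ℓ, lam k * a k ^ 2 := by
      rw [Finset.mul_sum]
      apply Finset.sum_le_sum
      intro k hk
      rw [Finset.mem_Ico] at hk
      have h1 := hmin k hk.1 hk.2
      have h2 : (ε / 2) * (ε / 2) ≤ a k * a k :=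
        mul_le_mul h1 h1 (by positivity) (ha0 k)
      nlinarith [(hlam k).le, ha0 k]
    have h2 : (ε / 2) ^ 2 * ∑ k ∈ Finset.Ico t ℓ, lam k
        < (ε / 2) ^ 2 * δ := by nlinarith
    exact lt_of_mul_lt_mul_left h2 (by positivity)
  -- Cauchy–Schwarz
  have hCS : (∑ k ∈ Finset.Ico t ℓ, d k) ^ 2
      ≤ (∑ k ∈ Finset.Ico t ℓ, (lam k)⁻¹ * d k ^ 2) * ∑ k ∈ Finset.Ico t ℓ, lam k := by
    have h := Finset.sum_mul_sq_le_sq_mul_sq (Finset.Ico t ℓ)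
      (fun k => Real.sqrt (lam k)⁻¹ * d k) (fun k => Real.sqrt (lam k))
    have e1 : ∀ k ∈ Finset.Ico t ℓ,
        (Real.sqrt (lam k)⁻¹ * d k) * Real.sqrt (lam k) = d k := by
      intro k _
      rw [mul_comm (Real.sqrt (lam k)⁻¹) (d k), mul_assoc,
        ← Real.sqrt_mul (inv_nonneg.mpr (hlam k).le), inv_mul_cancel₀ (hlam k).ne',
        Real.sqrt_one, mul_one]
    have e2 : ∀ k ∈ Finset.Ico t ℓ,
        (Real.sqrt (lam k)⁻¹ * d k) ^ 2 = (lam k)⁻¹ * d k ^ 2 := by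
      intro k _
      rw [mul_pow, Real.sq_sqrt (inv_nonneg.mpr (hlam k).le)]
    have e3 : ∀ k ∈ Finset.Ico t ℓ, (Real.sqrt (lam k)) ^ 2 = lam k := by
      intro k _
      exact Real.sq_sqrt (hlam k).le
    rw [Finset.sum_congr rfl e1, Finset.sum_congr rfl e2, Finset.sum_congr rfl e3] at h
    exact h
  -- telescoping bound
  have htel : a t - a ℓ ≤ L * ∑ k ∈ Finset.Ico t ℓ, d k := by
    have h1 : a ℓ - a t = ∑ k ∈ Finset.Ico t ℓ, (a (k + 1) - a k) := by
      rw [Finset.sum_Ico_eq_sub _ hspec.1.le, Finset.sum_range_sub a,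
        Finset.sum_range_sub a]
      ring
    calc a t - a ℓ ≤ |a ℓ - a t| := by rw [abs_sub_comm]; exact le_abs_self _
      _ = |∑ k ∈ Finset.Ico t ℓ, (a (k + 1) - a k)| := by rw [h1]
      _ ≤ ∑ k ∈ Finset.Ico t ℓ, |a (k + 1) - a k| := Finset.abs_sum_le_sum_abs _ _
      _ ≤ ∑ k ∈ Finset.Ico t ℓ, L * d k := Finset.sum_le_sum (fun k _ => hstep k)
      _ = L * ∑ k ∈ Finset.Ico t ℓ, d k := by rw [Finset.mul_sum]
  have hδsum : δ ≤ ∑ k ∈ Finset.Ico t ℓ, d k := by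
    have h1 : ε / 2 ≤ a t - a ℓ := by linarith [hspec.2]
    have h2 : ε / 2 ≤ L * ∑ k ∈ Finset.Ico t ℓ, d k := le_trans h1 htel
    rw [hδdef, div_le_iff₀ (by positivity)]
    calc ε ≤ 2 * (L * ∑ k ∈ Finset.Ico t ℓ, d k) := by linarith
      _ = (∑ k ∈ Finset.Ico t ℓ, d k) * (2 * L) := by ring
  have hfin : (∑ k ∈ Finset.Ico t ℓ, d k) ^ 2 < δ ^ 2 := by
    calc (∑ k ∈ Finset.Ico t ℓ, d k) ^ 2
        ≤ (∑ k ∈ Finset.Ico t ℓ, (lam k)⁻¹ * d k ^ 2) * ∑ k ∈ Finset.Ico t ℓ, lam k := hCS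
      _ < δ * δ := by
          apply mul_lt_mul'' hB1 hB3
          · exact Finset.sum_nonneg
              (fun k _ => mul_nonneg (inv_nonneg.mpr (hlam k).le) (sq_nonneg _))
          · exact Finset.sum_nonneg (fun k _ => (hlam k).le)
      _ = δ ^ 2 := by ring
  have : δ ^ 2 ≤ (∑ k ∈ Finset.Ico t ℓ, d k) ^ 2 := by
    apply pow_le_pow_left₀ hδ.le hδsum
  linarith
end

section
/- For scalars δ > 0, the function δ ↦ (1/δ)‖x − prox_{δφ}(x − δ∇f(x))‖ is nonincreasing in δ. Consequently, for 0 < λ ≤ 1 one has ‖F^λ(x)‖ ≤ ‖F^I(x)‖ and ‖F^I(x)‖ ≤ λ^{-1}‖F^λ(x)‖, where F^δ(x) := x − prox_{δφ}(x − δ∇f(x)). -/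
/-!
Minimality of the proximal point against the segment towards any `y` gives, for convex `φ`, the
variational inequality `⟪z - p, y - p⟫ ≤ δ (φ y - φ p)`. Writing it for `p = prox_{δφ}(x - δ g)`
tested at `p'`, and for `p' = prox_{δ'φ}(x - δ' g)` tested at `p`, and adding with weights `δ'`
and `δ`, the gradient terms cancel and one is left with `⟪δ' a - δ b, a - b⟫ ≤ 0` for the
residuals `a = x - p`, `b = x - p'`. By Cauchy–Schwarz this becomes
`(δ' ‖a‖ - δ ‖b‖) (‖a‖ - ‖b‖) ≤ 0`, which for `δ ≤ δ'` forces `δ ‖b‖ ≤ δ' ‖a‖` and `‖a‖ ≤ ‖b‖`.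
-/

open Set Filter Topology RealInnerProductSpace

lemma le_and_inv_mul_le_of_sub_mul_sub_nonpos {δ δ' A B : ℝ} (hδ : 0 < δ) (hδδ' : δ ≤ δ')
    (hA : 0 ≤ A) (h : (δ' * A - δ * B) * (A - B) ≤ 0) : A ≤ B ∧ δ'⁻¹ * B ≤ δ⁻¹ * A := by
  have hδA : δ * A ≤ δ' * A := mul_le_mul_of_nonneg_right hδδ' hA
  refine ⟨?_, ?_⟩
  · by_contra! hBA
    nlinarith [mul_lt_mul_of_pos_left hBA hδ]
  · rw [inv_mul_eq_div, inv_mul_eq_div, div_le_div_iff₀ (hδ.trans_le hδδ') hδ]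
    by_contra! hAB
    have hAB' : A < B := lt_of_mul_lt_mul_left (by linarith) hδ.le
    nlinarith

section InnerProductSpace

variable {E : Type*} [NormedAddCommGroup E] [InnerProductSpace ℝ E]

lemma sub_mul_sub_nonpos_of_inner_nonpos {δ δ' : ℝ} (hδδ' : 0 ≤ δ + δ') {a b : E}
    (h : ⟪δ' • a - δ • b, a - b⟫ ≤ 0) :
    (δ' * ‖a‖ - δ * ‖b‖) * (‖a‖ - ‖b‖) ≤ 0 := by
  have hexpand : ⟪δ' • a - δ • b, a - b⟫ = δ' * ‖a‖ ^ 2 - (δ + δ') * ⟪a, b⟫ + δ * ‖b‖ ^ 2 := by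
    simp only [inner_sub_left, inner_sub_right, real_inner_smul_left, real_inner_self_eq_norm_sq,
      real_inner_comm a b]
    ring
  nlinarith [mul_le_mul_of_nonneg_left (real_inner_le_norm a b) hδδ']

lemma ConvexOn.inner_sub_le_of_isProx {φ : E → ℝ} (hconv : ConvexOn ℝ univ φ) {δ : ℝ}
    (hδ : 0 < δ) {z p : E}
    (hp : ∀ y, φ p + (1 / (2 * δ)) * ‖z - p‖ ^ 2 ≤ φ y + (1 / (2 * δ)) * ‖z - y‖ ^ 2)
    (y : E) : ⟪z - p, y - p⟫ ≤ δ * (φ y - φ p) := by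
  have along_segment : ∀ t ∈ Ioc (0 : ℝ) 1,
      2 * (⟪z - p, y - p⟫ - δ * (φ y - φ p)) ≤ t * ‖y - p‖ ^ 2 := by
    rintro t ⟨ht, ht1⟩
    have hmin := hp (p + t • (y - p))
    have hseg : φ (p + t • (y - p)) ≤ (1 - t) * φ p + t * φ y := by
      have h := hconv.2 (mem_univ p) (mem_univ y) (sub_nonneg.2 ht1) ht.le (by ring)
      rwa [show (1 - t) • p + t • y = p + t • (y - p) by module] at h
    have hnorm : ‖z - (p + t • (y - p))‖ ^ 2
        = ‖z - p‖ ^ 2 - 2 * t * ⟪z - p, y - p⟫ + t ^ 2 * ‖y - p‖ ^ 2 := by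
      rw [show z - (p + t • (y - p)) = (z - p) - t • (y - p) by module, norm_sub_sq_real,
        real_inner_smul_right, norm_smul, mul_pow, Real.norm_eq_abs, sq_abs]
      ring
    rw [hnorm] at hmin
    have hscaled : 2 * t * ⟪z - p, y - p⟫ - t ^ 2 * ‖y - p‖ ^ 2 ≤ 2 * δ * (t * (φ y - φ p)) := by
      have h := mul_le_mul_of_nonneg_left (by linarith : (1 / (2 * δ)) *
        (2 * t * ⟪z - p, y - p⟫ - t ^ 2 * ‖y - p‖ ^ 2) ≤ t * (φ y - φ p))
        (by positivity : (0 : ℝ) ≤ 2 * δ)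
      rwa [← mul_assoc, mul_one_div_cancel (by positivity), one_mul] at h
    nlinarith
  have hlim : Tendsto (fun t : ℝ => t * ‖y - p‖ ^ 2) (𝓝[>] 0) (𝓝 0) :=
    ((continuous_mul_const _).tendsto' 0 0 (zero_mul _)).mono_left nhdsWithin_le_nhds
  have := ge_of_tendsto hlim (eventually_of_mem (Ioc_mem_nhdsGT zero_lt_one) along_segment)
  linarith

lemma inner_prox_residual_nonpos {φ : E → ℝ} (hconv : ConvexOn ℝ univ φ) {δ δ' : ℝ}
    (hδ : 0 < δ) (hδ' : 0 < δ') {x g p p' : E}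
    (hp : ∀ y, φ p + (1 / (2 * δ)) * ‖x - δ • g - p‖ ^ 2
      ≤ φ y + (1 / (2 * δ)) * ‖x - δ • g - y‖ ^ 2)
    (hp' : ∀ y, φ p' + (1 / (2 * δ')) * ‖x - δ' • g - p'‖ ^ 2
      ≤ φ y + (1 / (2 * δ')) * ‖x - δ' • g - y‖ ^ 2) :
    ⟪δ' • (x - p) - δ • (x - p'), (x - p) - (x - p')⟫ ≤ 0 := by
  have h := mul_le_mul_of_nonneg_left (hconv.inner_sub_le_of_isProx hδ hp p') hδ'.le
  have h' := mul_le_mul_of_nonneg_left (hconv.inner_sub_le_of_isProx hδ' hp' p) hδ.le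
  have hcombine : ⟪δ' • (x - p) - δ • (x - p'), (x - p) - (x - p')⟫
      = δ' * ⟪x - δ • g - p, p' - p⟫ + δ * ⟪x - δ' • g - p', p - p'⟫ := by
    rw [← real_inner_smul_left, ← real_inner_smul_left, show p - p' = -(p' - p) by abel,
      inner_neg_right, ← sub_eq_add_neg, ← inner_sub_left]
    congr 1 <;> module
  nlinarith

end InnerProductSpace

theorem residual_scaling_monotone_general {n : ℕ}
    (f' : EuclideanSpace ℝ (Fin n) → EuclideanSpace ℝ (Fin n))
    (φ : EuclideanSpace ℝ (Fin n) → ℝ)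
    (hconv : ConvexOn ℝ Set.univ φ)
    (δ δ' : ℝ) (hδ : 0 < δ) (hδδ' : δ ≤ δ')
    (x p p' : EuclideanSpace ℝ (Fin n))
    (hp : IsProx φ δ (x - δ • f' x) p)
    (hp' : IsProx φ δ' (x - δ' • f' x) p') :
    ‖x - p‖ ≤ ‖x - p'‖ ∧ δ'⁻¹ * ‖x - p'‖ ≤ δ⁻¹ * ‖x - p‖ := by
  have hinner := inner_prox_residual_nonpos hconv hδ (hδ.trans_le hδδ') hp hp'
  exact le_and_inv_mul_le_of_sub_mul_sub_nonpos hδ hδδ' (norm_nonneg _)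
    (sub_mul_sub_nonpos_of_inner_nonpos (by linarith) hinner)

/-- Scaling monotonicity of the prox-gradient residual
`F^δ(x) = x − prox_{δφ}(x − δ∇f(x))` (Nesterov): for `0 < δ ≤ δ'`,
`‖F^δ(x)‖ ≤ ‖F^{δ'}(x)‖` and `δ'⁻¹‖F^{δ'}(x)‖ ≤ δ⁻¹‖F^δ(x)‖`.
With `δ' = 1` this gives `‖F^λ(x)‖ ≤ ‖F^I(x)‖` and `‖F^I(x)‖ ≤ λ⁻¹‖F^λ(x)‖`
for `0 < λ ≤ 1`. -/
theorem residual_scaling_monotone {n : ℕ}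
    (f : EuclideanSpace ℝ (Fin n) → ℝ)
    (f' : EuclideanSpace ℝ (Fin n) → EuclideanSpace ℝ (Fin n))
    (φ : EuclideanSpace ℝ (Fin n) → ℝ)
    (hf : ∀ x, HasGradientAt f (f' x) x)
    (hconv : ConvexOn ℝ Set.univ φ) (hlsc : LowerSemicontinuous φ)
    (δ δ' : ℝ) (hδ : 0 < δ) (hδδ' : δ ≤ δ')
    (x p p' : EuclideanSpace ℝ (Fin n))
    (hp : IsProx φ δ (x - δ • f' x) p)
    (hp' : IsProx φ δ' (x - δ' • f' x) p') :
    ‖x - p‖ ≤ ‖x - p'‖ ∧ δ'⁻¹ * ‖x - p'‖ ≤ δ⁻¹ * ‖x - p‖ :=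
  residual_scaling_monotone_general f' φ hconv δ δ' hδ hδδ' x p p' hp hp'
end

section
/- Let δ₁ > 0, C ≥ 2, p ∈ ℕ, and let (u_i, y_i)_{i=0}^{q-1} with q ≤ p+1 be pairs in ℝᵐ \ {0} satisfying ‖y_i‖ ≤ C‖u_i‖ and |⟨u_i, y_i⟩| ≥ δ₁‖u_i‖² for all i. Define the L-BFGS recursion W⁰ := γI with γ := ⟨u_{q-1}, y_{q-1}⟩/‖y_{q-1}‖² (so |γ| ≤ 1/δ₁ by the curvature conditions), and W^{i+1} := (I − ρ_i u_i y_iᵀ) W^i (I − ρ_i y_i u_iᵀ) + ρ_i u_i u_iᵀ with ρ_i := 1/⟨u_i, y_i⟩. Then the spectral norms satisfy ‖W^{i+1}‖ ≤ (1 + C/δ₁)² ‖W^i‖ + 1/δ₁ for each i, and consequently ‖W^q‖ ≤ (1/δ₁) Σ_{i=0}^{q+1} ((C + δ₁)/δ₁)^{2i}, a bound depending only on C, δ₁, and p. -/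
open scoped RealInnerProductSpace

noncomputable def rankOne {m : ℕ} (u y : EuclideanSpace ℝ (Fin m)) :
    EuclideanSpace ℝ (Fin m) →L[ℝ] EuclideanSpace ℝ (Fin m) :=
  (innerSL ℝ y).smulRight u

lemma norm_rankOne {m : ℕ} (u y : EuclideanSpace ℝ (Fin m)) :
    ‖rankOne u y‖ = ‖y‖ * ‖u‖ := by
  rw [rankOne, ContinuousLinearMap.norm_smulRight_apply, innerSL_apply_norm]

lemma comp_add_norm_le {E : Type*} [NormedAddCommGroup E] [NormedSpace ℝ E]
    (A B Cc D : E →L[ℝ] E) :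
    ‖A.comp (B.comp Cc) + D‖ ≤ ‖A‖ * (‖B‖ * ‖Cc‖) + ‖D‖ := by
  refine le_trans (norm_add_le _ _) (add_le_add ?_ le_rfl)
  refine le_trans (ContinuousLinearMap.opNorm_comp_le _ _) ?_
  exact mul_le_mul_of_nonneg_left (ContinuousLinearMap.opNorm_comp_le _ _) (norm_nonneg _)

set_option maxHeartbeats 1000000 in
set_option synthInstance.maxHeartbeats 400000 in
/-- Deterministic core of Lemma 4.1: norm bound for the L-BFGS recursion
`W⁰ = γI`, `W^{i+1} = (I − ρᵢ uᵢ yᵢᵀ) Wⁱ (I − ρᵢ yᵢ uᵢᵀ) + ρᵢ uᵢ uᵢᵀ`,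
`ρᵢ = 1/⟨uᵢ, yᵢ⟩`, `γ = ⟨u_{q−1}, y_{q−1}⟩/‖y_{q−1}‖²`, built from curvature
pairs with `‖yᵢ‖ ≤ C‖uᵢ‖` and `|⟨uᵢ, yᵢ⟩| ≥ δ₁‖uᵢ‖²`:
`‖W^{i+1}‖ ≤ (1 + C/δ₁)²‖Wⁱ‖ + 1/δ₁` and
`‖W^q‖ ≤ (1/δ₁) Σ_{i=0}^{q+1} ((C + δ₁)/δ₁)^{2i}`. -/
theorem lbfgs_norm_bound {m : ℕ} (δ₁ C : ℝ) (hδ₁ : 0 < δ₁) (hC : 2 ≤ C)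
    (p q : ℕ) (hq : q ≤ p + 1) (hq1 : 1 ≤ q)
    (u y : ℕ → EuclideanSpace ℝ (Fin m))
    (hu : ∀ i < q, u i ≠ 0) (hy : ∀ i < q, y i ≠ 0)
    (hupper : ∀ i < q, ‖y i‖ ≤ C * ‖u i‖)
    (hcurv : ∀ i < q, δ₁ * ‖u i‖ ^ 2 ≤ |⟪u i, y i⟫|)
    (W : ℕ → EuclideanSpace ℝ (Fin m) →L[ℝ] EuclideanSpace ℝ (Fin m))
    (hW0 : W 0 = (⟪u (q - 1), y (q - 1)⟫ / ‖y (q - 1)‖ ^ 2) •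
        (ContinuousLinearMap.id ℝ (EuclideanSpace ℝ (Fin m))))
    (hWs : ∀ i < q, W (i + 1) =
        ((ContinuousLinearMap.id ℝ (EuclideanSpace ℝ (Fin m))
            - (⟪u i, y i⟫)⁻¹ • rankOne (u i) (y i)).comp
          ((W i).comp
            (ContinuousLinearMap.id ℝ (EuclideanSpace ℝ (Fin m))
              - (⟪u i, y i⟫)⁻¹ • rankOne (y i) (u i))))
        + (⟪u i, y i⟫)⁻¹ • rankOne (u i) (u i)) :
    (∀ i < q, ‖W (i + 1)‖ ≤ (1 + C / δ₁) ^ 2 * ‖W i‖ + 1 / δ₁) ∧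
    ‖W q‖ ≤ (1 / δ₁) * ∑ i ∈ Finset.range (q + 2), ((C + δ₁) / δ₁) ^ (2 * i) := by
  set r : ℝ := 1 + C / δ₁ with hr
  have hCδ : 0 < C / δ₁ := div_pos (by linarith) hδ₁
  have hr1 : 1 ≤ r := by simp [hr]; linarith
  have hr0 : 0 ≤ r := by linarith
  -- step bound
  have step : ∀ i < q, ‖W (i + 1)‖ ≤ r ^ 2 * ‖W i‖ + 1 / δ₁ := by
    intro i hi
    have hu0 : 0 < ‖u i‖ := norm_pos_iff.mpr (hu i hi)
    have ha : δ₁ * ‖u i‖ ^ 2 ≤ |⟪u i, y i⟫| := hcurv i hi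
    have hpos : 0 < δ₁ * ‖u i‖ ^ 2 := by positivity
    have hainv : |(⟪u i, y i⟫)⁻¹| ≤ (δ₁ * ‖u i‖ ^ 2)⁻¹ := by
      rw [abs_inv]
      exact inv_anti₀ hpos ha
    have habs0 : 0 ≤ |(⟪u i, y i⟫)⁻¹| := abs_nonneg _
    have hy' : ‖y i‖ ≤ C * ‖u i‖ := hupper i hi
    have hy0 : 0 ≤ ‖y i‖ := norm_nonneg _
    have key : ∀ v w : EuclideanSpace ℝ (Fin m), ‖v‖ * ‖w‖ ≤ C * ‖u i‖ ^ 2 →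
        ‖(⟪u i, y i⟫)⁻¹ • rankOne v w‖ ≤ C / δ₁ := by
      intro v w hvw
      refine le_trans (ContinuousLinearMap.opNorm_smul_le _ _) ?_
      rw [Real.norm_eq_abs, norm_rankOne]
      calc |(⟪u i, y i⟫)⁻¹| * (‖w‖ * ‖v‖) ≤ (δ₁ * ‖u i‖ ^ 2)⁻¹ * (C * ‖u i‖ ^ 2) := by
            apply mul_le_mul hainv (by nlinarith [norm_nonneg v, norm_nonneg w])
              (by positivity) (by positivity)
        _ = C / δ₁ := by field_simp
    have h1 : ‖(⟪u i, y i⟫)⁻¹ • rankOne (u i) (y i)‖ ≤ C / δ₁ :=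
      key _ _ (by nlinarith)
    have h2 : ‖(⟪u i, y i⟫)⁻¹ • rankOne (y i) (u i)‖ ≤ C / δ₁ :=
      key _ _ (by nlinarith)
    have h3 : ‖(⟪u i, y i⟫)⁻¹ • rankOne (u i) (u i)‖ ≤ 1 / δ₁ := by
      refine le_trans (ContinuousLinearMap.opNorm_smul_le _ _) ?_
      rw [Real.norm_eq_abs, norm_rankOne]
      calc |(⟪u i, y i⟫)⁻¹| * (‖u i‖ * ‖u i‖)
          ≤ (δ₁ * ‖u i‖ ^ 2)⁻¹ * (‖u i‖ * ‖u i‖) :=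
            mul_le_mul_of_nonneg_right hainv (by positivity)
        _ = 1 / δ₁ := by field_simp
    have hL : ‖ContinuousLinearMap.id ℝ (EuclideanSpace ℝ (Fin m))
        - (⟪u i, y i⟫)⁻¹ • rankOne (u i) (y i)‖ ≤ r := by
      calc _ ≤ ‖ContinuousLinearMap.id ℝ (EuclideanSpace ℝ (Fin m))‖
            + ‖(⟪u i, y i⟫)⁻¹ • rankOne (u i) (y i)‖ := norm_sub_le _ _
        _ ≤ 1 + C / δ₁ := add_le_add ContinuousLinearMap.norm_id_le h1
    have hR : ‖ContinuousLinearMap.id ℝ (EuclideanSpace ℝ (Fin m))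
        - (⟪u i, y i⟫)⁻¹ • rankOne (y i) (u i)‖ ≤ r := by
      calc _ ≤ ‖ContinuousLinearMap.id ℝ (EuclideanSpace ℝ (Fin m))‖
            + ‖(⟪u i, y i⟫)⁻¹ • rankOne (y i) (u i)‖ := norm_sub_le _ _
        _ ≤ 1 + C / δ₁ := add_le_add ContinuousLinearMap.norm_id_le h2
    rw [hWs i hi]
    refine le_trans (comp_add_norm_le _ _ _ _) ?_
    calc ‖ContinuousLinearMap.id ℝ (EuclideanSpace ℝ (Fin m))
            - (⟪u i, y i⟫)⁻¹ • rankOne (u i) (y i)‖ *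
          (‖W i‖ * ‖ContinuousLinearMap.id ℝ (EuclideanSpace ℝ (Fin m))
              - (⟪u i, y i⟫)⁻¹ • rankOne (y i) (u i)‖)
          + ‖(⟪u i, y i⟫)⁻¹ • rankOne (u i) (u i)‖
        ≤ r * (‖W i‖ * r) + 1 / δ₁ := by
          refine add_le_add ?_ h3
          exact mul_le_mul hL (mul_le_mul_of_nonneg_left hR (norm_nonneg _))
            (by positivity) hr0
      _ = r ^ 2 * ‖W i‖ + 1 / δ₁ := by ring
  -- base case
  have base : ‖W 0‖ ≤ 1 / δ₁ := by
    have hj : q - 1 < q := Nat.sub_lt hq1 one_pos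
    have hu0 : 0 < ‖u (q - 1)‖ := norm_pos_iff.mpr (hu _ hj)
    have hy0 : 0 < ‖y (q - 1)‖ := norm_pos_iff.mpr (hy _ hj)
    have hcs : |⟪u (q - 1), y (q - 1)⟫| ≤ ‖u (q - 1)‖ * ‖y (q - 1)‖ :=
      abs_real_inner_le_norm _ _
    have hl : δ₁ * ‖u (q - 1)‖ ^ 2 ≤ |⟪u (q - 1), y (q - 1)⟫| := hcurv _ hj
    have huy : δ₁ * ‖u (q - 1)‖ ≤ ‖y (q - 1)‖ := by
      nlinarith
    have hbd : |⟪u (q - 1), y (q - 1)⟫ / ‖y (q - 1)‖ ^ 2| ≤ 1 / δ₁ := by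
      rw [abs_div, abs_of_nonneg (by positivity : (0:ℝ) ≤ ‖y (q - 1)‖ ^ 2),
        div_le_div_iff₀ (by positivity) hδ₁]
      nlinarith
    rw [hW0]
    refine le_trans (ContinuousLinearMap.opNorm_smul_le _ _) ?_
    rw [Real.norm_eq_abs]
    calc |⟪u (q - 1), y (q - 1)⟫ / ‖y (q - 1)‖ ^ 2| *
          ‖ContinuousLinearMap.id ℝ (EuclideanSpace ℝ (Fin m))‖
        ≤ |⟪u (q - 1), y (q - 1)⟫ / ‖y (q - 1)‖ ^ 2| * 1 :=
          mul_le_mul_of_nonneg_left ContinuousLinearMap.norm_id_le (abs_nonneg _)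
      _ ≤ 1 / δ₁ := by rw [mul_one]; exact hbd
  -- induction
  have hrw : (C + δ₁) / δ₁ = r := by rw [hr, add_div, div_self hδ₁.ne', add_comm]
  have key : ∀ i, i ≤ q → ‖W i‖ ≤ (1 / δ₁) * ∑ k ∈ Finset.range (i + 1), r ^ (2 * k) := by
    intro i
    induction i with
    | zero => intro _; simpa using base
    | succ n ih =>
      intro hn
      have hn' : n < q := hn
      have hsum : ∑ k ∈ Finset.range (n + 2), r ^ (2 * k)
          = r ^ 2 * ∑ k ∈ Finset.range (n + 1), r ^ (2 * k) + 1 := by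
        rw [Finset.sum_range_succ' (fun k => r ^ (2 * k)) (n + 1), Finset.mul_sum]
        simp only [Nat.mul_zero, pow_zero]
        congr 1
        exact Finset.sum_congr rfl fun k _ => by ring
      calc ‖W (n + 1)‖ ≤ r ^ 2 * ‖W n‖ + 1 / δ₁ := step n hn'
        _ ≤ r ^ 2 * ((1 / δ₁) * ∑ k ∈ Finset.range (n + 1), r ^ (2 * k)) + 1 / δ₁ := by
            have := ih (le_of_lt hn')
            nlinarith [sq_nonneg r]
        _ = (1 / δ₁) * (r ^ 2 * ∑ k ∈ Finset.range (n + 1), r ^ (2 * k) + 1) := by ring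
        _ = (1 / δ₁) * ∑ k ∈ Finset.range (n + 2), r ^ (2 * k) := by rw [hsum]
  refine ⟨step, ?_⟩
  rw [hrw]
  calc ‖W q‖ ≤ (1 / δ₁) * ∑ k ∈ Finset.range (q + 1), r ^ (2 * k) := key q le_rfl
    _ ≤ (1 / δ₁) * ∑ k ∈ Finset.range (q + 2), r ^ (2 * k) := by
        apply mul_le_mul_of_nonneg_left _ (by positivity)
        apply Finset.sum_le_sum_of_subset_of_nonneg
          (Finset.range_subset_range.mpr (by omega))
        intro k _ _
        positivity
end
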